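/- Let G be a connected cyclic undirected graph with n nodes, m edges, cycle basis Σ, winding map w_Σ, and cycle-edge matrix C_Σ. Fix u ∈ Img(w_Σ) and define the open convex polytope P_u = {x ∈ ℝⁿ : x ⟂ 1_n and ‖Bᵀx + 2π C_Σ† u‖_∞ < π}. Then the map ι : Ω^G_u/𝕋¹ → P_u sending [θ] to the unique x ⟂ 1_n with (Bᵀθ) = Bᵀx + 2π C_Σ† u is a continuous bijection between the reduced winding cell Ω^G_u/𝕋¹ and P_u, and it restricts to a homeomorphism on every compact subset of Ω^G_u/𝕋¹. -/

import Mathlib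

open scoped BigOperators
open Real Matrix

noncomputable section

/-- Counterclockwise difference on the circle: the representative of `α - β` in `[-π, π)`. -/
def dcc (α β : Real.Angle) : ℝ := -((β - α).toReal)

/-- An oriented (multi)graph on node set `Fin n` with edge set `Fin m`;
each edge has a source and a target (sink) node. -/
structure OGraph (n m : ℕ) where
  src : Fin m → Fin n
  tgt : Fin m → Fin n
  noLoop : ∀ e, src e ≠ tgt e

namespace OGraph

variable {n m : ℕ}

/-- Incidence matrix `B`: entry `+1` at the sink (target) of an edge, `-1` at its source. -/
def inc (G : OGraph n m) : Matrix (Fin n) (Fin m) ℝ :=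
  Matrix.of fun k e => if k = G.tgt e then (1 : ℝ) else if k = G.src e then -1 else 0

/-- Two nodes are adjacent if some edge joins them. -/
def adjRel (G : OGraph n m) (i j : Fin n) : Prop :=
  ∃ e, (G.src e = i ∧ G.tgt e = j) ∨ (G.src e = j ∧ G.tgt e = i)

/-- The (undirected) graph is connected. -/
def Connected (G : OGraph n m) : Prop :=
  ∀ i j : Fin n, Relation.ReflTransGen G.adjRel i j

/-- The vector `(Bᵀ θ)` of counterclockwise differences along the oriented edges. -/
def edgeDiff (G : OGraph n m) (θ : Fin n → Real.Angle) : Fin m → ℝ :=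
  fun e => dcc (θ (G.tgt e)) (θ (G.src e))

/-- Membership in the punctured `n`-torus: all edge differences have geodesic length `< π`. -/
def Punctured (G : OGraph n m) (θ : Fin n → Real.Angle) : Prop :=
  ∀ e, |G.edgeDiff θ e| < π

/-- A cycle in the graph: a cyclically ordered sequence of `k + 3 ≥ 3` distinct nodes,
any two consecutive ones joined by an edge, traversed positively or negatively. -/
structure Cycle (G : OGraph n m) where
  k : ℕ
  vert : Fin (k + 3) → Fin n
  vertInj : Function.Injective vert
  edge : Fin (k + 3) → Fin m
  dir : Fin (k + 3) → Bool
  pos_compat : ∀ i, dir i = true → G.tgt (edge i) = vert i ∧ G.src (edge i) = vert (i + 1)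
  neg_compat : ∀ i, dir i = false → G.src (edge i) = vert i ∧ G.tgt (edge i) = vert (i + 1)

namespace Cycle

variable {G : OGraph n m}

/-- The number of nodes of the cycle. -/
def len (σ : G.Cycle) : ℕ := σ.k + 3

/-- Signed cycle vector `v_σ ∈ {-1,0,1}^m`. -/
def sgnVec (σ : G.Cycle) : Fin m → ℝ := fun e =>
  ∑ i : Fin (σ.k + 3), if σ.edge i = e then (if σ.dir i then (1 : ℝ) else -1) else 0

/-- Winding number of `θ` along the cycle `σ`. -/
def winding (σ : G.Cycle) (θ : Fin n → Real.Angle) : ℝ :=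
  (1 / (2 * π)) * ∑ i : Fin (σ.k + 3), dcc (θ (σ.vert i)) (θ (σ.vert (i + 1)))

end Cycle

/-- A family of cycles is a cycle basis if the signed cycle vectors form a basis
of the cycle space `Ker B`. -/
def IsCycleBasis (G : OGraph n m) (c : Fin (m + 1 - n) → G.Cycle) : Prop :=
  LinearIndependent ℝ (fun i => (c i).sgnVec) ∧
    Submodule.span ℝ (Set.range fun i => (c i).sgnVec) = LinearMap.ker G.inc.mulVecLin

/-- Cycle–edge matrix `C_Σ`, whose rows are the signed cycle vectors. -/
def cycMat (G : OGraph n m) (c : Fin (m + 1 - n) → G.Cycle) :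
    Matrix (Fin (m + 1 - n)) (Fin m) ℝ :=
  Matrix.of fun i e => (c i).sgnVec e

/-- Winding map along a family of cycles. -/
def windingMap (G : OGraph n m) (c : Fin (m + 1 - n) → G.Cycle)
    (θ : Fin n → Real.Angle) : Fin (m + 1 - n) → ℝ :=
  fun i => (c i).winding θ

/-- Image of the winding map over the punctured torus. -/
def windingImage (G : OGraph n m) (c : Fin (m + 1 - n) → G.Cycle) :
    Set (Fin (m + 1 - n) → ℝ) :=
  {u | ∃ θ, G.Punctured θ ∧ G.windingMap c θ = u}

/-- The `u`-winding cell `Ω^G_u = w_Σ⁻¹(u)`. -/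
def windingCell (G : OGraph n m) (c : Fin (m + 1 - n) → G.Cycle)
    (u : Fin (m + 1 - n) → ℝ) : Set (Fin n → Real.Angle) :=
  {θ | G.Punctured θ ∧ G.windingMap c θ = u}

end OGraph

/-- `(f, θ)` is a solution of the flow network problem for `(G, {h_e}, p, γ)`. -/
def IsFlowSol {n m : ℕ} (G : OGraph n m) (a : Fin m → ℝ) (h : Fin m → ℝ → ℝ)
    (p : Fin n → ℝ) (γ : ℝ) (f : Fin m → ℝ) (θ : Fin n → Real.Angle) : Prop :=
  G.inc.mulVec f = p ∧ (∀ e, f e = a e * h e (G.edgeDiff θ e)) ∧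
    ∀ e, |G.edgeDiff θ e| ≤ γ

/-- A flow function: continuously differentiable, `2π`-periodic, odd. -/
def IsFlowFun (h : ℝ → ℝ) : Prop :=
  ContDiff ℝ 1 h ∧ Function.Periodic h (2 * π) ∧ ∀ x, h (-x) = -h x

/-- Monotone on a set: strictly increasing or strictly decreasing. -/
def StrictMonoOrAntiOn (h : ℝ → ℝ) (s : Set ℝ) : Prop :=
  StrictMonoOn h s ∨ StrictAntiOn h s

/-- `ψ` is obtained from `θ` by a rigid rotation `rot_s`, `s ∈ [-π, π)`. -/
def RotEquiv {n : ℕ} (θ ψ : Fin n → Real.Angle) : Prop :=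
  ∃ s ∈ Set.Ico (-π) π, ∀ i, ψ i = θ i + (s : Real.Angle)

/-- `N` is the Moore–Penrose pseudoinverse of `M`. -/
def IsMoorePenrose {k l : ℕ} (M : Matrix (Fin k) (Fin l) ℝ)
    (N : Matrix (Fin l) (Fin k) ℝ) : Prop :=
  M * N * M = M ∧ N * M * N = N ∧ (M * N)ᵀ = M * N ∧ (N * M)ᵀ = N * M

/-- `D`-weighted norm `‖v‖_D = ‖D^{1/2} v‖₂` for a positive diagonal weight `d`. -/
def wNorm {k : ℕ} (d v : Fin k → ℝ) : ℝ := Real.sqrt (∑ e, d e * v e ^ 2)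

/-- `∞`-norm of a matrix: maximum absolute row sum. -/
def matInfNorm {k l : ℕ} (M : Matrix (Fin k) (Fin l) ℝ) : ℝ := ⨆ i, ∑ j, |M i j|

/-- The extended flow function `h_γ` (one scalar component). -/
def extFlow (h : ℝ → ℝ) (γ : ℝ) : ℝ → ℝ := fun y =>
  if γ ≤ y then deriv h γ * (y - γ) + h γ
  else if y ≤ -γ then deriv h γ * (y + γ) + h (-γ)
  else h y

/-- The vector `h_γ^{-1}(𝒜^{-1} f)`. -/
def hGammaInv {m : ℕ} (h : Fin m → ℝ → ℝ) (γ : ℝ) (a f : Fin m → ℝ) : Fin m → ℝ :=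
  fun e => Function.invFun (extFlow (h e) γ) (f e / a e)

/-- `(L_min)_{ee} = min_{y ∈ [-γ,γ]} h_e'(y)`. -/
def lminOf {m : ℕ} (h : Fin m → ℝ → ℝ) (γ : ℝ) : Fin m → ℝ :=
  fun e => sInf (deriv (h e) '' Set.Icc (-γ) γ)

/-- `(L_max)_{ee} = max_{y ∈ [-γ,γ]} h_e'(y)`. -/
def lmaxOf {m : ℕ} (h : Fin m → ℝ → ℝ) (γ : ℝ) : Fin m → ℝ :=
  fun e => sSup (deriv (h e) '' Set.Icc (-γ) γ)

/-- The `D`-weighted cycle projection `𝒫_D = I - D𝒜Bᵀ(B D𝒜 Bᵀ)† B`, where `N`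
stands for the pseudoinverse `(B D𝒜 Bᵀ)†`. -/
def cycProj {n m : ℕ} (G : OGraph n m) (a d : Fin m → ℝ)
    (N : Matrix (Fin n) (Fin n) ℝ) : Matrix (Fin m) (Fin m) ℝ :=
  1 - Matrix.diagonal d * Matrix.diagonal a * G.incᵀ * N * G.inc

/-- The `u`-winding fixed-point map `T_u`. -/
def Tmap {n m : ℕ} (G : OGraph n m) (a : Fin m → ℝ) (h : Fin m → ℝ → ℝ) (γ : ℝ)
    (N : Matrix (Fin n) (Fin n) ℝ) (Cdag : Matrix (Fin m) (Fin (m + 1 - n)) ℝ)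
    (u : Fin (m + 1 - n) → ℝ) (f : Fin m → ℝ) : Fin m → ℝ :=
  f - (cycProj G a (lminOf h γ) N).mulVec
    ((Matrix.diagonal (lminOf h γ) * Matrix.diagonal a).mulVec
      (hGammaInv h γ a f - (2 * π) • Cdag.mulVec u))

/-- The `u`-winding balance equation. -/
def WindingBalance {n m : ℕ} (G : OGraph n m) (a : Fin m → ℝ) (h : Fin m → ℝ → ℝ)
    (p : Fin n → ℝ) (γ : ℝ) (N : Matrix (Fin n) (Fin n) ℝ)
    (Cdag : Matrix (Fin m) (Fin (m + 1 - n)) ℝ) (u : Fin (m + 1 - n) → ℝ)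
    (f : Fin m → ℝ) : Prop :=
  G.inc.mulVec f = p ∧
    (cycProj G a (lminOf h γ) N).mulVec
      ((Matrix.diagonal (lminOf h γ) * Matrix.diagonal a).mulVec
        (hGammaInv h γ a f - (2 * π) • Cdag.mulVec u)) = 0 ∧
    ∀ e, |f e| ≤ a e * |h e γ|


/-- Rotation relation on the torus: two configurations are related if they differ
by a uniform rotation. -/
def rotSetoid (n : ℕ) : Setoid (Fin n → Real.Angle) :=
  ⟨fun θ ψ => ∃ s : ℝ, ∀ i, ψ i = θ i + (s : Real.Angle),
    ⟨fun θ => ⟨0, fun i => by simp⟩,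
     fun {θ ψ} hr => by
       obtain ⟨s, hs⟩ := hr
       refine ⟨-s, fun i => ?_⟩
       rw [hs i, Real.Angle.coe_neg]
       abel,
     fun {θ ψ χ} h1 h2 => by
       obtain ⟨s, hs⟩ := h1
       obtain ⟨t, ht⟩ := h2
       refine ⟨s + t, fun i => ?_⟩
       rw [ht i, hs i, Real.Angle.coe_add]
       abel⟩⟩

/-- The rotation relation restricted to a winding cell; the quotient is the
reduced winding cell `Ω^G_u / 𝕋¹`. -/
def cellSetoid {n m : ℕ} (G : OGraph n m) (c : Fin (m + 1 - n) → G.Cycle)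
    (u : Fin (m + 1 - n) → ℝ) : Setoid (G.windingCell c u) :=
  Setoid.comap Subtype.val (rotSetoid n)

/-!
Write `y(x) = Bᵀx + 2π C_Σ† u`. Two configurations with the same edge differences differ by a
rotation (the graph is connected), and `Bᵀ` is a closed linear embedding on `1_n^⊥`; this gives
injectivity and continuity of `ι`. For surjectivity, `C_Σ y(x) = 2πu = C_Σ (Bᵀθ₀)` for any `θ₀` in
the cell, and `Ker C_Σ = Img Bᵀ` because the rows of `C_Σ` span `Ker B`; so `y(x) - Bᵀθ₀` is a
potential difference `Bᵀz`, and `θ₀ + z` realises `y(x)`. On a compact set a continuous injection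
into a Hausdorff space is a homeomorphism onto its image.
-/

theorem Matrix.ker_mulVecLin_eq_range_transpose_of_span_row_eq_ker
    {K ι κ μ : Type*} [Field K] [Fintype ι] [Fintype κ] [Fintype μ]
    {A : Matrix ι μ K} {C : Matrix κ μ K}
    (h : Submodule.span K (Set.range C.row) = LinearMap.ker A.mulVecLin) :
    LinearMap.ker C.mulVecLin = LinearMap.range Aᵀ.mulVecLin := by
  -- The rows of `C` lie in `Ker A`, so `Img Aᵀ ≤ Ker C`; both have dimension `rank A`.
  have hle : LinearMap.range Aᵀ.mulVecLin ≤ LinearMap.ker C.mulVecLin := by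
    rintro _ ⟨x, rfl⟩
    have hrow : ∀ k, A *ᵥ C k = 0 := fun k =>
      (h ▸ Submodule.subset_span ⟨k, rfl⟩ : C.row k ∈ LinearMap.ker A.mulVecLin)
    funext k
    simp only [Matrix.mulVecLin_apply, Matrix.mulVec, Pi.zero_apply]
    rw [Matrix.dotProduct_mulVec, Matrix.vecMul_transpose, hrow, zero_dotProduct]
  refine (Submodule.eq_of_le_of_finrank_eq hle ?_).symm
  have hC := LinearMap.finrank_range_add_finrank_ker C.mulVecLin
  have hA := LinearMap.finrank_range_add_finrank_ker A.mulVecLin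
  have hCA : C.rank = Module.finrank K (LinearMap.ker A.mulVecLin) := by
    rw [Matrix.rank_eq_finrank_span_row, h]
  have hAt := Matrix.rank_transpose A
  simp only [Matrix.rank] at hCA hAt
  omega

theorem Real.Angle.continuousAt_toReal {x : Real.Angle} (hx : x ≠ π) :
    ContinuousAt Real.Angle.toReal x := by
  have : Fact ((0:ℝ) < 2 * π) := ⟨by positivity⟩
  have hfun : Real.Angle.toReal
      = fun y : Real.Angle => ((AddCircle.equivIoc (2*π) (-π) y : ℝ)) := by
    funext y
    induction y using Real.Angle.induction_on
    rw [Real.Angle.toReal_coe]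
    rfl
  rw [hfun]
  refine continuous_subtype_val.continuousAt.comp (AddCircle.continuousAt_equivIoc _ _ ?_)
  have hpi : ((-π : ℝ) : Real.Angle) = π := by rw [Real.Angle.coe_neg, Real.Angle.neg_coe_pi]
  exact fun h => hx (h.trans hpi)

theorem coe_dcc (α β : Real.Angle) : ((dcc α β : ℝ) : Real.Angle) = α - β := by
  rw [dcc, Real.Angle.coe_neg, Real.Angle.coe_toReal, neg_sub]

theorem dcc_eq_of_abs_lt {t : ℝ} (ht : |t| < π) {α β : Real.Angle}
    (h : α - β = t) : dcc α β = t := by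
  rw [abs_lt] at ht
  rw [dcc, ← neg_sub, h, ← Real.Angle.coe_neg,
    Real.Angle.toReal_coe_eq_self_iff.mpr ⟨by linarith, by linarith⟩, neg_neg]

theorem dcc_swap {α β : Real.Angle} (h : |dcc α β| < π) : dcc β α = -dcc α β :=
  dcc_eq_of_abs_lt (by rwa [abs_neg]) (by rw [Real.Angle.coe_neg, coe_dcc, neg_sub])

theorem Continuous.exists_homeomorph_image {X Y : Type*} [TopologicalSpace X]
    [TopologicalSpace Y] [T2Space Y] {f : X → Y} (hf : Continuous f) {K : Set X}
    (hK : IsCompact K) (hinj : Set.InjOn f K) :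
    ∃ e : K ≃ₜ f '' K, ∀ k : K, (e k : Y) = f k := by
  have : CompactSpace K := isCompact_iff_compactSpace.mp hK
  have hcont : Continuous (Equiv.Set.imageOfInjOn f K hinj) :=
    (hf.comp continuous_subtype_val).subtype_mk _
  exact ⟨hcont.homeoOfEquivCompactToT2, fun _ => rfl⟩

namespace OGraph

variable {n m : ℕ} (G : OGraph n m)

theorem incT_mulVec_apply (x : Fin n → ℝ) (e : Fin m) :
    (G.incᵀ *ᵥ x) e = x (G.tgt e) - x (G.src e) := by
  have hcol : (fun k => G.inc k e) = Pi.single (G.tgt e) 1 - Pi.single (G.src e) 1 := by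
    funext k
    by_cases ht : k = G.tgt e
    · subst ht; simp [inc, G.noLoop e |>.symm]
    · by_cases hs : k = G.src e
      · subst hs; simp [inc, G.noLoop e]
      · simp [inc, ht, hs]
  change (fun k => G.inc k e) ⬝ᵥ x = _
  rw [hcol, sub_dotProduct, single_one_dotProduct, single_one_dotProduct]

theorem coe_edgeDiff (θ : Fin n → Real.Angle) (e : Fin m) :
    (G.edgeDiff θ e : Real.Angle) = θ (G.tgt e) - θ (G.src e) :=
  coe_dcc _ _

theorem continuousOn_edgeDiff : ContinuousOn G.edgeDiff {θ | G.Punctured θ} := by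
  refine continuousOn_pi.mpr fun e θ hθ => ContinuousAt.continuousWithinAt ?_
  have hne : θ (G.src e) - θ (G.tgt e) ≠ π := fun h => by
    have := hθ e
    rw [edgeDiff, dcc, h, Real.Angle.toReal_pi, abs_neg, abs_of_pos Real.pi_pos] at this
    exact lt_irrefl _ this
  exact ((Real.Angle.continuousAt_toReal hne).comp
    (f := fun θ : Fin n → Real.Angle => θ (G.src e) - θ (G.tgt e)) (by fun_prop)).neg

variable {G}

namespace Connected

theorem eq_of_forall_edge (hconn : G.Connected) {A : Type*} {f : Fin n → A}
    (hf : ∀ e, f (G.tgt e) = f (G.src e)) (i j : Fin n) : f i = f j := by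
  induction hconn i j with
  | refl => rfl
  | tail _ hadj ih =>
    obtain ⟨e, ⟨rfl, rfl⟩ | ⟨rfl, rfl⟩⟩ := hadj
    · rw [ih, hf e]
    · rw [ih, hf e]

theorem eq_of_incT_mulVec_eq (hconn : G.Connected) {x y : Fin n → ℝ}
    (h : G.incᵀ *ᵥ x = G.incᵀ *ᵥ y) (hsum : ∑ i, x i = ∑ i, y i) : x = y := by
  have hconst : ∀ i j, (x - y) i = (x - y) j := hconn.eq_of_forall_edge fun e => by
    have := congrFun h e
    rw [incT_mulVec_apply, incT_mulVec_apply] at this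
    simp only [Pi.sub_apply]
    linarith
  funext i
  have hsum' : ∑ j, (x - y) j = n * (x - y) i := by
    simp only [← hconst i, Finset.sum_const, Finset.card_univ, Fintype.card_fin, nsmul_eq_mul]
  have hn : (n : ℝ) ≠ 0 := Nat.cast_ne_zero.mpr (Fin.pos i).ne'
  simp only [Pi.sub_apply, Finset.sum_sub_distrib, hsum, sub_self] at hsum'
  exact sub_eq_zero.mp ((mul_eq_zero.mp hsum'.symm).resolve_left hn)

end Connected

theorem Cycle.sum_sgnVec_mul (σ : G.Cycle) (f : Fin m → ℝ) :
    ∑ e, σ.sgnVec e * f e = ∑ i, (if σ.dir i then 1 else -1) * f (σ.edge i) := by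
  simp only [Cycle.sgnVec, Finset.sum_mul, ite_mul, zero_mul]
  rw [Finset.sum_comm]
  simp

theorem Cycle.sum_sgnVec_mul_edgeDiff (σ : G.Cycle) {θ : Fin n → Real.Angle}
    (hθ : G.Punctured θ) : ∑ e, σ.sgnVec e * G.edgeDiff θ e = 2 * π * σ.winding θ := by
  rw [σ.sum_sgnVec_mul, Cycle.winding, ← mul_assoc, mul_one_div_cancel (by positivity), one_mul]
  refine Finset.sum_congr rfl fun i _ => ?_
  cases hdir : σ.dir i
  · obtain ⟨hsrc, htgt⟩ := σ.neg_compat i hdir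
    have h := hθ (σ.edge i)
    rw [edgeDiff, htgt, hsrc] at h ⊢
    rw [dcc_swap h]
    simp
  · obtain ⟨htgt, hsrc⟩ := σ.pos_compat i hdir
    simp [edgeDiff, htgt, hsrc]

theorem cycMat_mulVec_edgeDiff (c : Fin (m + 1 - n) → G.Cycle) {θ : Fin n → Real.Angle}
    (hθ : G.Punctured θ) : G.cycMat c *ᵥ G.edgeDiff θ = (2 * π) • G.windingMap c θ := by
  funext i
  exact (c i).sum_sgnVec_mul_edgeDiff hθ

theorem ker_cycMat_eq_range_incT {c : Fin (m + 1 - n) → G.Cycle}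
    (hspan : Submodule.span ℝ (Set.range fun i => (c i).sgnVec) =
      LinearMap.ker G.inc.mulVecLin) :
    LinearMap.ker (G.cycMat c).mulVecLin = LinearMap.range G.incᵀ.mulVecLin :=
  Matrix.ker_mulVecLin_eq_range_transpose_of_span_row_eq_ker hspan

theorem Connected.rotSetoid_of_edgeDiff_eq (hconn : G.Connected) {θ ψ : Fin n → Real.Angle}
    (h : G.edgeDiff θ = G.edgeDiff ψ) : rotSetoid n θ ψ := by
  have hconst := hconn.eq_of_forall_edge (f := ψ - θ) fun e => by
    have := congrArg (fun y : Fin m → ℝ => (y e : Real.Angle)) h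
    simp only [coe_edgeDiff] at this
    simp only [Pi.sub_apply]
    rw [sub_eq_sub_iff_sub_eq_sub, ← this]
  rcases isEmpty_or_nonempty (Fin n) with hn | ⟨⟨i₀⟩⟩
  · exact ⟨0, fun i => isEmptyElim i⟩
  · refine ⟨((ψ - θ) i₀).toReal, fun i => ?_⟩
    rw [Real.Angle.coe_toReal, ← hconst i, Pi.sub_apply, add_sub_cancel]

theorem exists_mem_windingCell_edgeDiff_eq {c : Fin (m + 1 - n) → G.Cycle}
    (hspan : Submodule.span ℝ (Set.range fun i => (c i).sgnVec) =
      LinearMap.ker G.inc.mulVecLin)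
    {u : Fin (m + 1 - n) → ℝ} (hu : u ∈ G.windingImage c) {y : Fin m → ℝ}
    (hy : ∀ e, |y e| < π) (hCy : G.cycMat c *ᵥ y = (2 * π) • u) :
    ∃ θ ∈ G.windingCell c u, G.edgeDiff θ = y := by
  obtain ⟨θ₀, hθ₀, hθ₀u⟩ := hu
  have hker : y - G.edgeDiff θ₀ ∈ LinearMap.ker (G.cycMat c).mulVecLin := by
    rw [LinearMap.mem_ker, Matrix.mulVecLin_apply, Matrix.mulVec_sub, hCy,
      cycMat_mulVec_edgeDiff c hθ₀, hθ₀u, sub_self]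
  obtain ⟨z, hz⟩ := ker_cycMat_eq_range_incT hspan ▸ hker
  set θ : Fin n → Real.Angle := fun i => θ₀ i + z i
  have hθ : G.edgeDiff θ = y := funext fun e => dcc_eq_of_abs_lt (hy e) <| by
    have hze := congrFun hz e
    rw [Matrix.mulVecLin_apply, incT_mulVec_apply, Pi.sub_apply] at hze
    rw [show y e = G.edgeDiff θ₀ e + (z (G.tgt e) - z (G.src e)) by linarith,
      Real.Angle.coe_add, coe_edgeDiff, Real.Angle.coe_sub]
    simp only [θ]
    abel
  have hθp : G.Punctured θ := fun e => hθ ▸ hy e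
  refine ⟨θ, ⟨hθp, ?_⟩, hθ⟩
  have h2π : (2 * π) ≠ 0 := by positivity
  rw [← hθ, cycMat_mulVec_edgeDiff c hθp] at hCy
  exact smul_right_injective _ h2π hCy

theorem Connected.isClosedEmbedding_incT_mulVec_prod_sum (hconn : G.Connected) :
    Topology.IsClosedEmbedding fun x : Fin n → ℝ => (G.incᵀ *ᵥ x, ∑ i, x i) := by
  let φ : (Fin n → ℝ) →ₗ[ℝ] (Fin m → ℝ) × ℝ :=
    G.incᵀ.mulVecLin.prod (∑ i, LinearMap.proj i)
  have hφ : ⇑φ = fun x => (G.incᵀ *ᵥ x, ∑ i, x i) :=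
    funext fun x => Prod.ext rfl (by simp [φ])
  rw [← hφ]
  refine LinearMap.isClosedEmbedding_of_injective (LinearMap.ker_eq_bot.mpr fun x y h => ?_)
  rw [hφ, Prod.mk.injEq] at h
  exact hconn.eq_of_incT_mulVec_eq h.1 h.2

/-- The set `P_u` of the paper, for the offset `w = 2π C_Σ† u`. -/
def cellPolytope (G : OGraph n m) (w : Fin m → ℝ) : Set (Fin n → ℝ) :=
  {x | (∑ i, x i = 0) ∧ ∀ e, |(G.incᵀ.mulVec x + w) e| < π}

/-- `ι` is the map `[θ] ↦ x` of the paper, with the offset `2π C_Σ† u` replaced by any `w`. -/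
def IsCellCoordinate (G : OGraph n m) (c : Fin (m + 1 - n) → G.Cycle)
    (u : Fin (m + 1 - n) → ℝ) (w : Fin m → ℝ) (ι : Quotient (cellSetoid G c u) → (Fin n → ℝ)) :
    Prop :=
  ∀ θ : G.windingCell c u, (∑ i, ι (Quotient.mk (cellSetoid G c u) θ) i = 0) ∧
    G.edgeDiff (θ : Fin n → Real.Angle) =
      G.incᵀ.mulVec (ι (Quotient.mk (cellSetoid G c u) θ)) + w

namespace IsCellCoordinate

variable {c : Fin (m + 1 - n) → G.Cycle} {u : Fin (m + 1 - n) → ℝ} {w : Fin m → ℝ}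
  {ι : Quotient (cellSetoid G c u) → (Fin n → ℝ)}

theorem continuous (hι : G.IsCellCoordinate c u w ι) (hconn : G.Connected) : Continuous ι := by
  refine isQuotientMap_quot_mk.continuous_iff.mpr <|
    hconn.isClosedEmbedding_incT_mulVec_prod_sum.isEmbedding.continuous_iff.mpr ?_
  have hformula : ∀ θ : G.windingCell c u,
      (G.incᵀ *ᵥ ι (Quotient.mk _ θ), ∑ i, ι (Quotient.mk _ θ) i) =
        (G.edgeDiff (θ : Fin n → Real.Angle) - w, 0) := fun θ => by
    rw [(hι θ).1, (hι θ).2, add_sub_cancel_right]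
  have hedge : Continuous fun θ : G.windingCell c u => G.edgeDiff (θ : Fin n → Real.Angle) :=
    G.continuousOn_edgeDiff.comp_continuous continuous_subtype_val fun θ => θ.2.1
  exact (continuous_congr hformula).mpr ((hedge.sub continuous_const).prodMk continuous_const)

theorem injective (hι : G.IsCellCoordinate c u w ι) (hconn : G.Connected) :
    Function.Injective ι := by
  refine Quotient.ind₂ fun θ ψ h => Quotient.sound <| hconn.rotSetoid_of_edgeDiff_eq ?_
  rw [(hι θ).2, (hι ψ).2, h]

theorem mapsTo (hι : G.IsCellCoordinate c u w ι) : Set.MapsTo ι Set.univ (G.cellPolytope w) :=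
  Quotient.ind fun θ _ => ⟨(hι θ).1, fun e => (hι θ).2 ▸ θ.2.1 e⟩

theorem surjOn (hι : G.IsCellCoordinate c u w ι) (hconn : G.Connected)
    (hspan : Submodule.span ℝ (Set.range fun i => (c i).sgnVec) =
      LinearMap.ker G.inc.mulVecLin)
    (hu : u ∈ G.windingImage c) (hw : G.cycMat c *ᵥ w = (2 * π) • u) :
    Set.SurjOn ι Set.univ (G.cellPolytope w) := by
  rintro x ⟨hx, hxπ⟩
  have hCx : G.cycMat c *ᵥ (G.incᵀ *ᵥ x) = 0 :=
    (ker_cycMat_eq_range_incT hspan).ge ⟨x, rfl⟩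
  obtain ⟨θ, hθ, hθy⟩ := exists_mem_windingCell_edgeDiff_eq hspan hu hxπ
    (by rw [Matrix.mulVec_add, hCx, hw, zero_add])
  refine ⟨Quotient.mk _ ⟨θ, hθ⟩, trivial, hconn.eq_of_incT_mulVec_eq ?_ (by rw [(hι _).1, hx])⟩
  have := (hι ⟨θ, hθ⟩).2
  rw [hθy] at this
  exact (add_right_cancel this).symm

end IsCellCoordinate

end OGraph

theorem winding_cell_polytope_homeo_general {n m : ℕ} (G : OGraph n m)
    (hconn : G.Connected)
    (c : Fin (m + 1 - n) → G.Cycle) (hbasis : G.IsCycleBasis c)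
    (Cdag : Matrix (Fin m) (Fin (m + 1 - n)) ℝ)
    (hCdag : IsMoorePenrose (G.cycMat c) Cdag)
    (u : Fin (m + 1 - n) → ℝ) (hu : u ∈ G.windingImage c)
    (ι : Quotient (cellSetoid G c u) → (Fin n → ℝ))
    (hι : ∀ θ : G.windingCell c u,
      (∑ i, ι (Quotient.mk (cellSetoid G c u) θ) i = 0) ∧
      G.edgeDiff (θ : Fin n → Real.Angle) =
        G.incᵀ.mulVec (ι (Quotient.mk (cellSetoid G c u) θ)) + (2 * π) • Cdag.mulVec u) :
    Continuous ι ∧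
    Set.BijOn ι Set.univ
      {x : Fin n → ℝ | (∑ i, x i = 0) ∧
        ∀ e, |(G.incᵀ.mulVec x + (2 * π) • Cdag.mulVec u) e| < π} ∧
    ∀ K : Set (Quotient (cellSetoid G c u)), IsCompact K →
      ∃ e : K ≃ₜ (ι '' K), ∀ k : K, (e k : Fin n → ℝ) = ι k.1 := by
  have hι : G.IsCellCoordinate c u ((2 * π) • Cdag *ᵥ u) ι := hι
  -- `u` lies in the range of `C_Σ`, on which `C_Σ C_Σ†` is the identity.
  have hw : G.cycMat c *ᵥ ((2 * π) • Cdag *ᵥ u) = (2 * π) • u := by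
    obtain ⟨θ, hθ, rfl⟩ := hu
    rw [← Matrix.mulVec_smul, ← OGraph.cycMat_mulVec_edgeDiff c hθ, Matrix.mulVec_mulVec,
      Matrix.mulVec_mulVec, hCdag.1]
  exact ⟨hι.continuous hconn,
    ⟨hι.mapsTo, (hι.injective hconn).injOn, hι.surjOn hconn hbasis.2 hu hw⟩,
    fun K hK => (hι.continuous hconn).exists_homeomorph_image hK (hι.injective hconn).injOn⟩

/-- (Polytopic characterization, part 2: the map `ι` sending a
rotation class `[θ]` in the reduced winding cell to the unique `x ⟂ 1_n` with
`Bᵀθ = Bᵀx + 2π C_Σ† u` is a continuous bijection onto the open polytope `P_u`,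
and a homeomorphism on every compact subset). -/
theorem winding_cell_polytope_homeo {n m : ℕ} (hn : 0 < n) (G : OGraph n m)
    (hconn : G.Connected) (hcyc : Nonempty G.Cycle)
    (c : Fin (m + 1 - n) → G.Cycle) (hbasis : G.IsCycleBasis c)
    (Cdag : Matrix (Fin m) (Fin (m + 1 - n)) ℝ)
    (hCdag : IsMoorePenrose (G.cycMat c) Cdag)
    (u : Fin (m + 1 - n) → ℝ) (hu : u ∈ G.windingImage c)
    (ι : Quotient (cellSetoid G c u) → (Fin n → ℝ))
    (hι : ∀ θ : G.windingCell c u,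
      (∑ i, ι (Quotient.mk (cellSetoid G c u) θ) i = 0) ∧
      G.edgeDiff (θ : Fin n → Real.Angle) =
        G.incᵀ.mulVec (ι (Quotient.mk (cellSetoid G c u) θ)) + (2 * π) • Cdag.mulVec u) :
    Continuous ι ∧
    Set.BijOn ι Set.univ
      {x : Fin n → ℝ | (∑ i, x i = 0) ∧
        ∀ e, |(G.incᵀ.mulVec x + (2 * π) • Cdag.mulVec u) e| < π} ∧
    ∀ K : Set (Quotient (cellSetoid G c u)), IsCompact K →
      ∃ e : K ≃ₜ (ι '' K), ∀ k : K, (e k : Fin n → ℝ) = ι k.1 :=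
  winding_cell_polytope_homeo_general G hconn c hbasis Cdag hCdag u hu ι hι
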